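/- Let K ≥ 2 and let Φ : ℝ^K → ℝ^K be defined by Φ_k(x) = γ_{k−1}·(e^(−(x_k−x_{k−1})) − 1) − γ_k·(e^(−(x_{k+1}−x_k)) − 1), where γ_k = k·(K−k)/2 and γ₀ = γ_K = 0. Let e₁ = (1/√K)·(1, …, 1) ∈ ℝ^K. For every M > 0 there exists C(M) > 0 such that for every t₀ > 0 and every differentiable function ϖ : [t₀, ∞) → ℝ^K satisfying ϖ'(t) = t^(−1)·Φ(ϖ(t)) for all t ≥ t₀ and ‖ϖ(t₀)‖ ≤ M, one has for all t ≥ t₀: ‖ϖ(t) − (ϖ(t₀), e₁)·e₁‖ ≤ C(M)·t₀/t, where (·,·) and ‖·‖ denote the Euclidean inner product and norm on ℝ^K. -/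

import Mathlib

/-- The coefficients `γ_k = k (K - k) / 2`. -/
noncomputable def γcoef (K k : ℕ) : ℝ := (k : ℝ) * ((K : ℝ) - (k : ℝ)) / 2

/-- The interaction map `Φ : ℝ^K → ℝ^K` (written in `0`-based indexing; the boundary
terms carry the vanishing coefficients `γ₀ = γ_K = 0`). -/
noncomputable def Phi (K : ℕ) (x : Fin K → ℝ) : Fin K → ℝ := fun i =>
  let x' : ℕ → ℝ := fun n => if h : n < K then x ⟨n, h⟩ else 0
  γcoef K i * (Real.exp (-(x' i - x' ((i : ℕ) - 1))) - 1) -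
    γcoef K ((i : ℕ) + 1) * (Real.exp (-(x' ((i : ℕ) + 1) - x' i)) - 1)

/-!
Write `E(t)` for the squared distance of `ϖ(t)` to the diagonal and `d_j = x_j - x_{j-1}`.
Since `Φ_k` is a difference of consecutive fluxes `γ_j (e^{-d_j} - 1)`, the mean of `ϖ` is
conserved, and summation by parts gives `E' = (2/t) ∑_j γ_j (e^{-d_j} - 1) d_j
≤ -(2/t) ∑_j γ_j e^{-|d_j|} d_j²`. The sharp weighted Poincaré inequality
`∑_i (x_i - x̄)² ≤ ∑_j γ_j d_j²` (from `K ∑_i (x_i - x̄)² = ∑_{i<l} (x_l - x_i)²`, Cauchy–Schwarz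
along `(i, l]` and `∑_{i<j≤l} (l - i) = K γ_j`) then yields `E' ≤ -(2c/t) E` whenever
`e^{-|d_j|} ≥ c`, while `|d_j| ≤ 2√E`. Three Grönwall steps follow: `c = 0` gives `E ≤ M²`;
then `c = e^{-2M}` gives `√E ≤ M (t₀/t)^c`; finally `c = 1 - 2M (t₀/t)^c`, whose defect is
integrable against `dt/t`, gives `√E ≤ C t₀/t`.
-/

open Finset Real

theorem sum_Ioc_sub_pred {M : Type*} [AddCommGroup M] (X : ℕ → M) {i l : ℕ} (h : i ≤ l) :
    ∑ j ∈ Ioc i l, (X j - X (j - 1)) = X l - X i := by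
  induction l, h using Nat.le_induction with
  | base => simp
  | succ l hl ih => rw [sum_Ioc_succ_top hl, ih, Nat.add_sub_cancel]; abel

theorem sq_sub_le_mul_sum_Ioc_sq (X : ℕ → ℝ) {i l : ℕ} (h : i ≤ l) :
    (X l - X i) ^ 2 ≤ ((l : ℝ) - i) * ∑ j ∈ Ioc i l, (X j - X (j - 1)) ^ 2 := by
  rw [← sum_Ioc_sub_pred X h, ← Nat.cast_sub h, ← Nat.card_Ioc]
  exact sq_sum_le_card_mul_sum_sq

theorem sum_range_sum_range_sum_Ioc_comm {M : Type*} [AddCommMonoid M] (K : ℕ)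
    (f : ℕ → ℕ → ℕ → M) :
    ∑ l ∈ range K, ∑ i ∈ range l, ∑ j ∈ Ioc i l, f i j l
      = ∑ j ∈ range K, ∑ l ∈ Ico j K, ∑ i ∈ range j, f i j l := by
  calc ∑ l ∈ range K, ∑ i ∈ range l, ∑ j ∈ Ioc i l, f i j l
      = ∑ l ∈ range K, ∑ j ∈ range (l + 1), ∑ i ∈ range j, f i j l :=
        sum_congr rfl fun l _ => sum_comm' fun i j => by simp only [mem_range, mem_Ioc]; omega
    _ = ∑ j ∈ range K, ∑ l ∈ Ico j K, ∑ i ∈ range j, f i j l :=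
        sum_comm' fun l j => by simp only [mem_range, mem_Ico]; omega

theorem sum_range_natCast (n : ℕ) : ∑ i ∈ range n, (i : ℝ) = n * (n - 1) / 2 := by
  induction n with
  | zero => simp
  | succ n ih => rw [sum_range_succ, ih]; push_cast; ring

theorem sum_Ico_sum_range_sub {j K : ℕ} (h : j ≤ K) :
    ∑ l ∈ Ico j K, ∑ i ∈ range j, ((l : ℝ) - i) = K * γcoef K j := by
  simp only [sum_Ico_eq_sub _ h, sum_sub_distrib, sum_const, card_range, nsmul_eq_mul, ← mul_sum,
    sum_range_natCast, γcoef]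
  ring

theorem card_mul_sum_sq_sub_sq_sum {R : Type*} [CommRing R] (X : ℕ → R) (n : ℕ) :
    n * ∑ i ∈ range n, X i ^ 2 - (∑ i ∈ range n, X i) ^ 2
      = ∑ l ∈ range n, ∑ i ∈ range l, (X l - X i) ^ 2 := by
  induction n with
  | zero => simp
  | succ n ih =>
    have hn : ∑ i ∈ range n, (X n - X i) ^ 2
        = n * X n ^ 2 - 2 * X n * ∑ i ∈ range n, X i + ∑ i ∈ range n, X i ^ 2 := by
      simp only [sub_sq, sum_add_distrib, sum_sub_distrib, sum_const, card_range, nsmul_eq_mul,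
        ← mul_sum, mul_assoc]
    rw [sum_range_succ, sum_range_succ, sum_range_succ _ n, ← ih, hn]
    push_cast
    ring

theorem card_mul_sum_sq_sub_mean {F : Type*} [Field F] [CharZero F] (X : ℕ → F) (n : ℕ) :
    n * ∑ i ∈ range n, (X i - (∑ k ∈ range n, X k) / n) ^ 2
      = ∑ l ∈ range n, ∑ i ∈ range l, (X l - X i) ^ 2 := by
  rcases n.eq_zero_or_pos with rfl | hn
  · simp
  rw [← card_mul_sum_sq_sub_sq_sum]
  have hn' : (n : F) ≠ 0 := Nat.cast_ne_zero.2 hn.ne'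
  simp only [sub_sq, sum_add_distrib, sum_sub_distrib, sum_const, card_range, nsmul_eq_mul,
    ← sum_mul, ← mul_sum]
  field_simp
  ring

theorem sum_sq_sub_mean_le_sum_γcoef_mul_sq (K : ℕ) (X : ℕ → ℝ) :
    ∑ i ∈ range K, (X i - (∑ k ∈ range K, X k) / K) ^ 2
      ≤ ∑ j ∈ range K, γcoef K j * (X j - X (j - 1)) ^ 2 := by
  rcases K.eq_zero_or_pos with rfl | hK
  · simp
  refine le_of_mul_le_mul_left ?_ (Nat.cast_pos.2 hK : (0 : ℝ) < K)
  calc (K : ℝ) * ∑ i ∈ range K, (X i - (∑ k ∈ range K, X k) / K) ^ 2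
      = ∑ l ∈ range K, ∑ i ∈ range l, (X l - X i) ^ 2 := card_mul_sum_sq_sub_mean X K
    _ ≤ ∑ l ∈ range K, ∑ i ∈ range l, ∑ j ∈ Ioc i l, ((l : ℝ) - i) * (X j - X (j - 1)) ^ 2 := by
        gcongr with l _ i hi
        rw [← mul_sum]
        exact sq_sub_le_mul_sum_Ioc_sq X (mem_range.1 hi).le
    _ = ∑ j ∈ range K, (∑ l ∈ Ico j K, ∑ i ∈ range j, ((l : ℝ) - i)) * (X j - X (j - 1)) ^ 2 := by
        rw [sum_range_sum_range_sum_Ioc_comm]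
        simp only [sum_mul]
    _ = K * ∑ j ∈ range K, γcoef K j * (X j - X (j - 1)) ^ 2 := by
        rw [mul_sum]
        refine sum_congr rfl fun j hj => ?_
        rw [sum_Ico_sum_range_sub (mem_range.1 hj).le, mul_assoc]

theorem exp_neg_sub_one_mul_le (d : ℝ) : (exp (-d) - 1) * d ≤ -(exp (-|d|) * d ^ 2) := by
  have hinv : exp (-d) * exp d = 1 := by rw [← exp_add, neg_add_cancel, exp_zero]
  rcases le_total 0 d with hd | hd
  · rw [abs_of_nonneg hd]
    nlinarith [add_one_le_exp d, exp_pos (-d), mul_nonneg hd (exp_pos (-d)).le]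
  · rw [abs_of_nonpos hd, neg_neg]
    nlinarith [add_one_le_exp (-d), exp_le_one_iff.2 hd,
      mul_nonneg (neg_nonneg.2 hd) (neg_nonneg.2 hd)]

theorem γcoef_nonneg {K j : ℕ} (h : j ≤ K) : 0 ≤ γcoef K j :=
  div_nonneg (mul_nonneg j.cast_nonneg (sub_nonneg.2 (Nat.cast_le.2 h))) zero_le_two

theorem sum_range_mul_sub_succ {R : Type*} [CommRing R] {g : ℕ → R} {K : ℕ} (h0 : g 0 = 0)
    (hK : g K = 0) (Y : ℕ → R) :
    ∑ n ∈ range K, Y n * (g n - g (n + 1)) = ∑ n ∈ range K, (Y n - Y (n - 1)) * g n := by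
  have hshift : ∑ n ∈ range K, Y n * g (n + 1) = ∑ n ∈ range K, Y (n - 1) * g n := by
    have h₁ := sum_range_succ' (fun n => Y (n - 1) * g n) K
    have h₂ := sum_range_succ (fun n => Y (n - 1) * g n) K
    simp only [Nat.add_sub_cancel, h0, hK, mul_zero, add_zero] at h₁ h₂
    exact h₁.symm.trans h₂
  simp only [mul_sub, sub_mul, sum_sub_distrib, hshift]

section
variable {K : ℕ}

noncomputable def vecMean (x : Fin K → ℝ) : ℝ := (∑ k, x k) / K

/-- `‖x - (x, e₁) e₁‖²` for `e₁ = (1, …, 1) / √K`. -/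
noncomputable def sqDistDiag (x : Fin K → ℝ) : ℝ := ∑ k, (x k - vecMean x) ^ 2

theorem sqDistDiag_nonneg (x : Fin K → ℝ) : 0 ≤ sqDistDiag x :=
  sum_nonneg fun _ _ => sq_nonneg _

theorem sqDistDiag_le_sum_sq (x : Fin K → ℝ) : sqDistDiag x ≤ ∑ k, x k ^ 2 := by
  rcases K.eq_zero_or_pos with rfl | hK
  · simp [sqDistDiag]
  have hK' : (K : ℝ) ≠ 0 := by positivity
  have hsplit : sqDistDiag x = ∑ k, x k ^ 2 - K * vecMean x ^ 2 := by
    simp only [sqDistDiag, vecMean, sub_sq, sum_add_distrib, sum_sub_distrib, sum_const, card_univ,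
      Fintype.card_fin, nsmul_eq_mul, ← sum_mul, ← mul_sum]
    field_simp
    ring
  rw [hsplit]
  nlinarith [sq_nonneg (vecMean x), (Nat.cast_pos.2 hK : (0 : ℝ) < K)]

theorem abs_sub_vecMean_le (x : Fin K → ℝ) (k : Fin K) : |x k - vecMean x| ≤ √(sqDistDiag x) :=
  abs_le_sqrt (single_le_sum (f := fun k => (x k - vecMean x) ^ 2) (fun _ _ => sq_nonneg _)
    (mem_univ k))

end

namespace Phi
variable {K : ℕ}

noncomputable def padZero (x : Fin K → ℝ) (n : ℕ) : ℝ := if h : n < K then x ⟨n, h⟩ else 0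

/-- `incr x 0 = 0`, by truncated subtraction. -/
noncomputable def incr (x : Fin K → ℝ) (j : ℕ) : ℝ := padZero x j - padZero x (j - 1)

noncomputable def flux (x : Fin K → ℝ) (j : ℕ) : ℝ := γcoef K j * (exp (-incr x j) - 1)

theorem padZero_val (x : Fin K → ℝ) (i : Fin K) : padZero x i = x i := dif_pos i.isLt

theorem apply_eq_flux_sub (x : Fin K → ℝ) (i : Fin K) :
    Phi K x i = flux x i - flux x (i + 1) := rfl

theorem sum_range_comp_padZero (f : ℝ → ℝ) (x : Fin K → ℝ) :
    ∑ n ∈ range K, f (padZero x n) = ∑ k, f (x k) := by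
  rw [← Fin.sum_univ_eq_sum_range (fun n => f (padZero x n))]
  simp only [padZero_val]

theorem flux_zero (x : Fin K → ℝ) : flux x 0 = 0 := by simp [flux, γcoef]

theorem flux_self (x : Fin K → ℝ) : flux x K = 0 := by simp [flux, γcoef]

theorem sum_mul_Phi (x y : Fin K → ℝ) :
    ∑ k, y k * Phi K x k = ∑ j ∈ range K, incr y j * flux x j := by
  calc ∑ k, y k * Phi K x k = ∑ n ∈ range K, padZero y n * (flux x n - flux x (n + 1)) := by
        rw [← Fin.sum_univ_eq_sum_range (fun n => padZero y n * (flux x n - flux x (n + 1)))]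
        simp only [padZero_val, apply_eq_flux_sub]
    _ = _ := sum_range_mul_sub_succ (flux_zero x) (flux_self x) (padZero y)

theorem sum_Phi (x : Fin K → ℝ) : ∑ k, Phi K x k = 0 := by
  calc ∑ k, Phi K x k = ∑ n ∈ range K, (flux x n - flux x (n + 1)) :=
        Fin.sum_univ_eq_sum_range (fun n => flux x n - flux x (n + 1)) K
    _ = 0 := by rw [sum_range_sub', flux_zero, flux_self, sub_zero]

theorem abs_incr_le (x : Fin K → ℝ) {j : ℕ} (hj : j < K) : |incr x j| ≤ 2 * √(sqDistDiag x) := by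
  rcases j.eq_zero_or_pos with rfl | hj0
  · simp [incr]
  have hj' : j - 1 < K := by omega
  calc |incr x j| = |(x ⟨j, hj⟩ - vecMean x) - (x ⟨j - 1, hj'⟩ - vecMean x)| := by
        simp only [incr, padZero, dif_pos hj, dif_pos hj', sub_sub_sub_cancel_right]
    _ ≤ |x ⟨j, hj⟩ - vecMean x| + |x ⟨j - 1, hj'⟩ - vecMean x| := abs_sub _ _
    _ ≤ 2 * √(sqDistDiag x) := by
        linarith [abs_sub_vecMean_le x ⟨j, hj⟩, abs_sub_vecMean_le x ⟨j - 1, hj'⟩]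

theorem sqDistDiag_le_sum_γcoef_mul_incr_sq (x : Fin K → ℝ) :
    sqDistDiag x ≤ ∑ j ∈ range K, γcoef K j * incr x j ^ 2 := by
  have hsum : ∑ n ∈ range K, padZero x n = ∑ k, x k := sum_range_comp_padZero id x
  have h := sum_sq_sub_mean_le_sum_γcoef_mul_sq K (padZero x)
  rw [hsum] at h
  exact (sum_range_comp_padZero (fun v => (v - (∑ k, x k) / K) ^ 2) x).symm.trans_le h

theorem sum_sub_vecMean_mul_le (x : Fin K → ℝ) {c : ℝ}
    (hc : ∀ j < K, c ≤ exp (-|incr x j|)) :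
    ∑ k, (x k - vecMean x) * Phi K x k ≤ -c * sqDistDiag x := by
  -- Poincaré only helps for a nonnegative rate; for `c < 0` the bound with rate `0` suffices.
  set c' := max c 0
  have hflux : ∀ j ∈ range K, incr x j * flux x j ≤ γcoef K j * -(c' * incr x j ^ 2) := by
    intro j hj
    have hj := mem_range.1 hj
    have hc' : c' ≤ exp (-|incr x j|) := max_le (hc j hj) (exp_pos _).le
    calc incr x j * flux x j = γcoef K j * ((exp (-incr x j) - 1) * incr x j) := by
          rw [flux]; ring
      _ ≤ γcoef K j * -(exp (-|incr x j|) * incr x j ^ 2) :=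
          mul_le_mul_of_nonneg_left (exp_neg_sub_one_mul_le _) (γcoef_nonneg hj.le)
      _ ≤ γcoef K j * -(c' * incr x j ^ 2) := by
          gcongr
          · exact γcoef_nonneg hj.le
  calc ∑ k, (x k - vecMean x) * Phi K x k = ∑ j ∈ range K, incr x j * flux x j := by
        simp only [sub_mul, sum_sub_distrib, ← mul_sum, sum_Phi, mul_zero, sub_zero, sum_mul_Phi]
    _ ≤ ∑ j ∈ range K, γcoef K j * -(c' * incr x j ^ 2) := sum_le_sum hflux
    _ = -c' * ∑ j ∈ range K, γcoef K j * incr x j ^ 2 := by rw [mul_sum]; congr 1 with j; ring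
    _ ≤ -c' * sqDistDiag x :=
        mul_le_mul_of_nonpos_left (sqDistDiag_le_sum_γcoef_mul_incr_sq x)
          (neg_nonpos.2 (le_max_right c 0))
    _ ≤ -c * sqDistDiag x :=
        mul_le_mul_of_nonneg_right (neg_le_neg (le_max_left c 0)) (sqDistDiag_nonneg x)

end Phi

open Set

theorem antitoneOn_mul_exp_of_hasDerivWithinAt {f f' φ φ' : ℝ → ℝ} {a : ℝ}
    (hf : ∀ t ≥ a, HasDerivWithinAt f (f' t) (Ici a) t)
    (hφ : ∀ t ≥ a, HasDerivWithinAt φ (φ' t) (Ici a) t) (h : ∀ t > a, f' t ≤ -(φ' t * f t)) :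
    AntitoneOn (fun t => f t * exp (φ t)) (Ici a) := by
  have hderiv : ∀ t ≥ a, HasDerivWithinAt (fun t => f t * exp (φ t))
      (exp (φ t) * (f' t + φ' t * f t)) (Ici a) t := fun t ht =>
    ((hf t ht).mul (hφ t ht).exp).congr_deriv (by ring)
  have hderivAt : ∀ t ∈ interior (Ici a), HasDerivAt (fun t => f t * exp (φ t))
      (exp (φ t) * (f' t + φ' t * f t)) t := fun t ht => by
    rw [interior_Ici] at ht
    exact (hderiv t ht.le).hasDerivAt (Ici_mem_nhds ht)
  refine antitoneOn_of_deriv_nonpos (convex_Ici a) (fun t ht => (hderiv t ht).continuousWithinAt)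
    (fun t ht => (hderivAt t ht).differentiableAt.differentiableWithinAt) fun t ht => ?_
  rw [(hderivAt t ht).deriv]
  rw [interior_Ici] at ht
  exact mul_nonpos_of_nonneg_of_nonpos (exp_pos _).le (by linarith [h t ht])

theorem hasDerivAt_two_mul_log_add_mul_exp {a b c s : ℝ} (hc : c ≠ 0) (hs : s ≠ 0) :
    HasDerivAt (fun s => 2 * log s + 4 * b / c * exp (c * (a - log s)))
      (2 * (1 - 2 * (b * exp (c * (a - log s)))) / s) s := by
  refine (((hasDerivAt_log hs).const_mul 2).add ((((hasDerivAt_log hs).const_sub a).const_mul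
    c).exp.const_mul (4 * b / c))).congr_deriv ?_
  field_simp
  ring

theorem vecMean_eq_sum_mul_one_div_sqrt {K : ℕ} (x : Fin K → ℝ) :
    vecMean x = (∑ j, x j * (1 / √K)) * (1 / √K) := by
  rw [← sum_mul, mul_assoc, div_mul_div_comm, one_mul, mul_self_sqrt (Nat.cast_nonneg K),
    mul_one_div, vecMean]

def IsUnperturbedSolution (K : ℕ) (t₀ : ℝ) (ϖ : ℝ → Fin K → ℝ) : Prop :=
  ∀ t ≥ t₀, ∀ k : Fin K, HasDerivWithinAt (fun s => ϖ s k) (t⁻¹ * Phi K (ϖ t) k) (Ici t₀) t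

namespace IsUnperturbedSolution
variable {K : ℕ} {t₀ : ℝ} {ϖ : ℝ → Fin K → ℝ}

theorem vecMean_eq (h : IsUnperturbedSolution K t₀ ϖ) {t : ℝ} (ht : t₀ ≤ t) :
    vecMean (ϖ t) = vecMean (ϖ t₀) := by
  have hsum : ∀ s ≥ t₀, HasDerivWithinAt (fun u => ∑ k, ϖ u k) 0 (Ici t₀) s := fun s hs => by
    simpa only [← mul_sum, Phi.sum_Phi, mul_zero] using
      HasDerivWithinAt.fun_sum (u := univ) fun k _ => h s hs k
  have := constant_of_has_deriv_right_zero (fun s hs => (hsum s hs.1).continuousWithinAt.mono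
    Icc_subset_Ici_self) (fun s hs => (hsum s hs.1).mono (Ici_subset_Ici.2 hs.1)) t ⟨ht, le_rfl⟩
  simp only [vecMean, this]

theorem hasDerivWithinAt_sqDistDiag (h : IsUnperturbedSolution K t₀ ϖ) {t : ℝ} (ht : t₀ ≤ t) :
    HasDerivWithinAt (fun s => sqDistDiag (ϖ s))
      (2 * t⁻¹ * ∑ k, (ϖ t k - vecMean (ϖ t)) * Phi K (ϖ t) k) (Ici t₀) t := by
  have hd : HasDerivWithinAt (fun s => ∑ k, (ϖ s k - vecMean (ϖ t₀)) ^ 2)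
      (∑ k, 2 * (ϖ t k - vecMean (ϖ t₀)) ^ 1 * (t⁻¹ * Phi K (ϖ t) k)) (Ici t₀) t :=
    HasDerivWithinAt.fun_sum fun k _ => ((h t ht k).sub_const _).pow 2
  refine (hd.congr (fun s hs => by simp only [sqDistDiag, h.vecMean_eq hs])
    (by simp only [sqDistDiag, h.vecMean_eq ht])).congr_deriv ?_
  rw [h.vecMean_eq ht, mul_sum]
  congr 1 with k
  ring

theorem antitoneOn_sqDistDiag_mul_exp (h : IsUnperturbedSolution K t₀ ϖ) (ht₀ : 0 < t₀)
    {c φ : ℝ → ℝ} (hφ : ∀ t ≥ t₀, HasDerivWithinAt φ (2 * c t / t) (Ici t₀) t)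
    (hc : ∀ t > t₀, ∀ j < K, c t ≤ exp (-|Phi.incr (ϖ t) j|)) :
    AntitoneOn (fun t => sqDistDiag (ϖ t) * exp (φ t)) (Ici t₀) := by
  refine antitoneOn_mul_exp_of_hasDerivWithinAt (fun t ht => h.hasDerivWithinAt_sqDistDiag ht) hφ
    fun t ht => ?_
  have hR := Phi.sum_sub_vecMean_mul_le (ϖ t) (hc t ht)
  have ht' : 0 < t := ht₀.trans ht
  calc 2 * t⁻¹ * ∑ k, (ϖ t k - vecMean (ϖ t)) * Phi K (ϖ t) k
      ≤ 2 * t⁻¹ * (-c t * sqDistDiag (ϖ t)) := by gcongr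
    _ = -(2 * c t / t * sqDistDiag (ϖ t)) := by ring

theorem sqDistDiag_le (h : IsUnperturbedSolution K t₀ ϖ) (ht₀ : 0 < t₀) {t : ℝ} (ht : t₀ ≤ t) :
    sqDistDiag (ϖ t) ≤ sqDistDiag (ϖ t₀) := by
  have hanti := h.antitoneOn_sqDistDiag_mul_exp ht₀ (c := 0) (φ := fun _ => 0)
    (fun t _ => by simpa using hasDerivWithinAt_const t (Ici t₀) (0 : ℝ))
    (fun _ _ _ _ => (exp_pos _).le)
  simpa using hanti self_mem_Ici ht ht

theorem sqrt_sqDistDiag_le_mul_exp (h : IsUnperturbedSolution K t₀ ϖ) (ht₀ : 0 < t₀) {M : ℝ}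
    (hM : √(sqDistDiag (ϖ t₀)) ≤ M) {t : ℝ} (ht : t₀ ≤ t) :
    √(sqDistDiag (ϖ t)) ≤ M * exp (exp (-(2 * M)) * (log t₀ - log t)) := by
  set c := exp (-(2 * M))
  have hanti := h.antitoneOn_sqDistDiag_mul_exp ht₀ (c := fun _ => c) (φ := fun s => 2 * c * log s)
    (fun s hs => ((hasDerivAt_log (ht₀.trans_le hs).ne').const_mul (2 * c)).hasDerivWithinAt)
    (fun s hs j hj => exp_le_exp.2 <| neg_le_neg <| (Phi.abs_incr_le _ hj).trans <| by
      linarith [(sqrt_le_sqrt (h.sqDistDiag_le ht₀ hs.le)).trans hM])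
  have key : sqDistDiag (ϖ t) * exp (2 * c * log t) ≤ sqDistDiag (ϖ t₀) * exp (2 * c * log t₀) :=
    hanti self_mem_Ici ht ht
  have hsplit : exp (2 * c * log t₀) = exp (2 * c * log t) * exp (c * (log t₀ - log t)) ^ 2 := by
    rw [← exp_nat_mul, ← exp_add]; push_cast; ring_nf
  have hM0 : 0 ≤ M := (sqrt_nonneg _).trans hM
  rw [sqrt_le_left (by positivity)]
  rw [hsplit, mul_comm (exp (2 * c * log t)), ← mul_assoc] at key
  refine (le_of_mul_le_mul_right key (exp_pos _)).trans ?_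
  rw [mul_pow]
  gcongr
  exact (sqrt_le_left hM0).1 hM

theorem sqrt_sqDistDiag_le_div (h : IsUnperturbedSolution K t₀ ϖ) (ht₀ : 0 < t₀) {M : ℝ}
    (hM : √(sqDistDiag (ϖ t₀)) ≤ M) {t : ℝ} (ht : t₀ ≤ t) :
    √(sqDistDiag (ϖ t)) ≤ M * exp (2 * M * exp (2 * M)) * t₀ / t := by
  have hM0 : 0 ≤ M := (sqrt_nonneg _).trans hM
  have ht' : 0 < t := ht₀.trans_le ht
  set c := exp (-(2 * M))
  -- `φ - 2 log` is bounded because the defect `2 M (t₀/s)^c` of the rate is integrable in `ds/s`.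
  set φ : ℝ → ℝ := fun s => 2 * log s + 4 * M / c * exp (c * (log t₀ - log s))
  have hrate : ∀ s > t₀, ∀ j < K,
      1 - 2 * (M * exp (c * (log t₀ - log s))) ≤ exp (-|Phi.incr (ϖ s) j|) := fun s hs j hj => by
    have := (Phi.abs_incr_le (ϖ s) hj).trans
      (mul_le_mul_of_nonneg_left (h.sqrt_sqDistDiag_le_mul_exp ht₀ hM hs.le) zero_le_two)
    linarith [add_one_le_exp (-|Phi.incr (ϖ s) j|)]
  have key : sqDistDiag (ϖ t) * exp (φ t) ≤ sqDistDiag (ϖ t₀) * exp (φ t₀) :=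
    h.antitoneOn_sqDistDiag_mul_exp ht₀ (fun s hs => (hasDerivAt_two_mul_log_add_mul_exp
      (exp_pos _).ne' (ht₀.trans_le hs).ne').hasDerivWithinAt) hrate self_mem_Ici ht ht
  have hexp_log : ∀ s > 0, exp (2 * log s) = s ^ 2 := fun s hs => by
    rw [two_mul, exp_add, exp_log hs, sq]
  have hφt : t ^ 2 ≤ exp (φ t) := by
    rw [← hexp_log t ht']
    exact exp_le_exp.2 (le_add_of_nonneg_right (by positivity))
  have hφt₀ : exp (φ t₀) = t₀ ^ 2 * exp (2 * M * exp (2 * M)) ^ 2 := by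
    simp only [φ, c, sub_self, mul_zero, exp_zero, mul_one, exp_add, hexp_log t₀ ht₀, ← exp_nat_mul,
      div_eq_mul_inv, ← exp_neg, neg_neg]
    ring_nf
  have hE₀ : sqDistDiag (ϖ t₀) ≤ M ^ 2 := (sqrt_le_left hM0).1 hM
  rw [sqrt_le_left (by positivity), div_pow, le_div_iff₀ (by positivity)]
  calc sqDistDiag (ϖ t) * t ^ 2 ≤ sqDistDiag (ϖ t) * exp (φ t) :=
        mul_le_mul_of_nonneg_left hφt (sqDistDiag_nonneg _)
    _ ≤ sqDistDiag (ϖ t₀) * exp (φ t₀) := key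
    _ ≤ M ^ 2 * exp (φ t₀) := mul_le_mul_of_nonneg_right hE₀ (exp_pos _).le
    _ = (M * exp (2 * M * exp (2 * M)) * t₀) ^ 2 := by rw [hφt₀]; ring

end IsUnperturbedSolution

theorem unperturbed_system_convergence_general (K : ℕ) :
    ∀ M > (0 : ℝ), ∃ C > (0 : ℝ), ∀ t₀ > (0 : ℝ), ∀ ϖ : ℝ → Fin K → ℝ,
      (∀ t ≥ t₀, ∀ k : Fin K,
        HasDerivWithinAt (fun s => ϖ s k) (t⁻¹ * Phi K (ϖ t) k) (Set.Ici t₀) t) →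
      Real.sqrt (∑ k, ϖ t₀ k ^ 2) ≤ M →
      ∀ t ≥ t₀,
        Real.sqrt (∑ k, (ϖ t k - (∑ j, ϖ t₀ j * (1 / Real.sqrt K)) * (1 / Real.sqrt K)) ^ 2)
          ≤ C * t₀ / t := by
  intro M hM
  refine ⟨M * exp (2 * M * exp (2 * M)), by positivity, fun t₀ ht₀ ϖ hode hM₀ t ht => ?_⟩
  have hϖ : IsUnperturbedSolution K t₀ ϖ := hode
  rw [← vecMean_eq_sum_mul_one_div_sqrt, ← hϖ.vecMean_eq ht]
  exact hϖ.sqrt_sqDistDiag_le_div ht₀ ((sqrt_le_sqrt (sqDistDiag_le_sum_sq _)).trans hM₀) ht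

theorem unperturbed_system_convergence (K : ℕ) (hK : 2 ≤ K) :
    ∀ M > (0 : ℝ), ∃ C > (0 : ℝ), ∀ t₀ > (0 : ℝ), ∀ ϖ : ℝ → Fin K → ℝ,
      (∀ t ≥ t₀, ∀ k : Fin K,
        HasDerivWithinAt (fun s => ϖ s k) (t⁻¹ * Phi K (ϖ t) k) (Set.Ici t₀) t) →
      Real.sqrt (∑ k, ϖ t₀ k ^ 2) ≤ M →
      ∀ t ≥ t₀,
        Real.sqrt (∑ k, (ϖ t k - (∑ j, ϖ t₀ j * (1 / Real.sqrt K)) * (1 / Real.sqrt K)) ^ 2)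
          ≤ C * t₀ / t :=
  unperturbed_system_convergence_general K
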